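/- Let a : Ω × ℝ × ℝⁿ → ℝⁿ satisfy the strengthened monotonicity ⟨a(x,u,ξ) - a(x,u,η), ξ-η⟩ ≥ m(1+|(ξ+η)/2|²)^((p-2)/2)|ξ-η|² with m > 0, p ≥ 2. Then there exists c̃ > 0 (depending only on m, p) such that for all ξ, η ∈ ℝⁿ and u ∈ ℝ: |ξ|^p ≤ c̃(|η|^p + ⟨a(x,u,ξ) - a(x,u,η), ξ - η⟩). -/

import Mathlib

theorem stmt_14 (n : ℕ) (Ω : Set (EuclideanSpace ℝ (Fin n))) (hΩo : IsOpen Ω)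
    (a : EuclideanSpace ℝ (Fin n) → ℝ → EuclideanSpace ℝ (Fin n) → EuclideanSpace ℝ (Fin n))
    (m p : ℝ) (hm : 0 < m) (hp : 2 ≤ p)
    (hmono : ∀ x ∈ Ω, ∀ (u : ℝ) (ξ η : EuclideanSpace ℝ (Fin n)),
      (inner ℝ (a x u ξ - a x u η) (ξ - η) : ℝ)
        ≥ m * (1 + ‖(2:ℝ)⁻¹ • (ξ + η)‖ ^ 2) ^ ((p - 2) / 2) * ‖ξ - η‖ ^ 2) :
    ∃ c > 0, ∀ x ∈ Ω, ∀ (u : ℝ) (ξ η : EuclideanSpace ℝ (Fin n)),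
      ‖ξ‖ ^ p ≤ c * (‖η‖ ^ p + (inner ℝ (a x u ξ - a x u η) (ξ - η) : ℝ)) := by
  have hp0 : (0:ℝ) ≤ p := by linarith
  have h4p : (0:ℝ) < (4:ℝ) ^ p := Real.rpow_pos_of_pos (by norm_num) p
  refine ⟨2 ^ p + 4 ^ p / m, by positivity, ?_⟩
  intro x hx u ξ η
  have hmono' := hmono x hx u ξ η
  have hIpos : (0:ℝ) ≤ (inner ℝ (a x u ξ - a x u η) (ξ - η) : ℝ) := by
    refine le_trans ?_ hmono'
    positivity
  set I : ℝ := (inner ℝ (a x u ξ - a x u η) (ξ - η) : ℝ) with hI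
  have hη : (0:ℝ) ≤ ‖η‖ ^ p := Real.rpow_nonneg (norm_nonneg _) p
  have h2p : (0:ℝ) < (2:ℝ) ^ p := Real.rpow_pos_of_pos (by norm_num) p
  rcases le_or_gt ‖ξ‖ (2 * ‖η‖) with h | h
  · have h1 : ‖ξ‖ ^ p ≤ (2 * ‖η‖) ^ p :=
      Real.rpow_le_rpow (norm_nonneg _) h hp0
    have h2 : ((2:ℝ) * ‖η‖) ^ p = 2 ^ p * ‖η‖ ^ p :=
      Real.mul_rpow (by norm_num) (norm_nonneg _)
    have hd : (0:ℝ) ≤ 4 ^ p / m := by positivity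
    nlinarith
  · have hξpos : 0 < ‖ξ‖ := lt_of_le_of_lt (by positivity) h
    have hdiff : ‖ξ‖ / 2 ≤ ‖ξ - η‖ := by
      have := norm_sub_norm_le ξ η
      linarith
    have hmid : ‖ξ‖ / 4 ≤ ‖(2:ℝ)⁻¹ • (ξ + η)‖ := by
      rw [norm_smul]
      have h1 : ‖ξ‖ - ‖η‖ ≤ ‖ξ + η‖ := by
        have := norm_sub_norm_le ξ (-η)
        simpa using this
      have : ‖((2:ℝ)⁻¹ : ℝ)‖ = 2⁻¹ := by norm_num
      rw [this]
      linarith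
    set t : ℝ := ‖ξ‖ / 4 with ht
    have htpos : 0 < t := by positivity
    have hsq : t ^ (2:ℕ) ≤ 1 + ‖(2:ℝ)⁻¹ • (ξ + η)‖ ^ 2 := by
      nlinarith [norm_nonneg ((2:ℝ)⁻¹ • (ξ + η))]
    have hpow : t ^ (p - 2) ≤ (1 + ‖(2:ℝ)⁻¹ • (ξ + η)‖ ^ 2) ^ ((p - 2) / 2) := by
      have := Real.rpow_le_rpow (by positivity) hsq (by linarith : (0:ℝ) ≤ (p-2)/2)
      calc t ^ (p - 2) = (t ^ (2:ℕ)) ^ ((p-2)/2) := by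
            rw [← Real.rpow_natCast t 2, ← Real.rpow_mul htpos.le]
            congr 1
            ring
        _ ≤ _ := this
    have hlow : m * t ^ (p - 2) * (‖ξ‖ / 2) ^ 2 ≤ I := by
      refine le_trans ?_ hmono'
      have hsq2 : (‖ξ‖ / 2) ^ 2 ≤ ‖ξ - η‖ ^ 2 := by
        nlinarith [norm_nonneg (ξ - η)]
      have h1 : m * t ^ (p-2) * (‖ξ‖/2)^2 ≤ m * ((1 + ‖(2:ℝ)⁻¹ • (ξ + η)‖ ^ 2) ^ ((p - 2) / 2)) * (‖ξ‖/2)^2 := by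
        have ht2 : (0:ℝ) ≤ (‖ξ‖/2)^2 := by positivity
        exact mul_le_mul_of_nonneg_right (mul_le_mul_of_nonneg_left hpow hm.le) ht2
      refine le_trans h1 ?_
      have hb : (0:ℝ) ≤ m * (1 + ‖(2:ℝ)⁻¹ • (ξ + η)‖ ^ 2) ^ ((p - 2) / 2) := by positivity
      nlinarith
    -- rewrite t^(p-2) = ‖ξ‖^(p-2) / 4^(p-2)
    have h4p2 : (0:ℝ) < (4:ℝ) ^ (p-2) := Real.rpow_pos_of_pos (by norm_num) _
    have htp : t ^ (p - 2) = ‖ξ‖ ^ (p - 2) / 4 ^ (p - 2) := by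
      rw [ht]; exact Real.div_rpow (norm_nonneg ξ) (by norm_num) (p - 2)
    have hxip : ‖ξ‖ ^ (p - 2) * ‖ξ‖ ^ (2:ℕ) = ‖ξ‖ ^ p := by
      rw [← Real.rpow_natCast ‖ξ‖ 2, ← Real.rpow_add hξpos]
      norm_num
    have h4 : (4:ℝ) ^ (p - 2) * 4 ≤ 4 ^ p := by
      have : (4:ℝ) ^ (p - 2) * 4 ^ (2:ℝ) = 4 ^ p := by
        rw [← Real.rpow_add (by norm_num : (0:ℝ) < 4)]; norm_num
      have h42 : (4:ℝ) ≤ 4 ^ (2:ℝ) := by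
        rw [show ((2:ℝ)) = ((2:ℕ):ℝ) by norm_num, Real.rpow_natCast]; norm_num
      nlinarith [Real.rpow_pos_of_pos (show (0:ℝ) < 4 by norm_num) (p-2)]
    have hxp : (0:ℝ) < ‖ξ‖ ^ p := Real.rpow_pos_of_pos hξpos p
    have key : m * ‖ξ‖ ^ p ≤ 4 ^ p * I := by
      have hlow' : m * (‖ξ‖ ^ (p-2) / 4 ^ (p-2)) * (‖ξ‖^2 / 4) ≤ I := by
        have : (‖ξ‖ / 2) ^ 2 = ‖ξ‖ ^ 2 / 4 := by ring
        rw [htp, this] at hlow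
        exact hlow
      have heq : m * (‖ξ‖ ^ (p-2) / 4 ^ (p-2)) * (‖ξ‖^2 / 4) = m * ‖ξ‖ ^ p / (4 ^ (p-2) * 4) := by
        rw [← hxip]
        push_cast
        field_simp
      rw [heq] at hlow'
      have h44 : (0:ℝ) < 4 ^ (p-2) * 4 := by positivity
      calc m * ‖ξ‖ ^ p = (m * ‖ξ‖ ^ p / (4 ^ (p-2) * 4)) * (4 ^ (p-2) * 4) := by
            field_simp
        _ ≤ I * (4 ^ p) := by
            apply mul_le_mul hlow' h4 h44.le hIpos
        _ = 4 ^ p * I := by ring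
    have hfin : ‖ξ‖ ^ p ≤ 4 ^ p / m * I := by
      calc ‖ξ‖ ^ p = (m * ‖ξ‖ ^ p) / m := by field_simp
        _ ≤ (4 ^ p * I) / m := by gcongr
        _ = 4 ^ p / m * I := by ring
    have expand : ((2:ℝ) ^ p + 4 ^ p / m) * (‖η‖ ^ p + I)
        = 2 ^ p * ‖η‖ ^ p + 2 ^ p * I + (4 ^ p / m) * ‖η‖ ^ p + (4 ^ p / m) * I := by ring
    rw [expand]
    linarith [mul_nonneg h2p.le hη, mul_nonneg h2p.le hIpos,
      mul_nonneg (div_nonneg h4p.le hm.le) hη, hfin]
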